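/- Let θ: [0,∞) → ℝ be strictly increasing. Let X₀ < X_f and let x₀ = X₀, x₁, ..., xₙ = X_f be a discretized path that is not monotone (i.e., there exists i with x_i < X₀ or x_i > X_f, or the increments change sign). Then there exists a monotone discretized path y₀ = X₀, y₁, ..., yₙ = X_f with ∑_{i=0}^{n-1} θ(|y_{i+1} - y_i|) < ∑_{i=0}^{n-1} θ(|x_{i+1} - x_i|), provided some x_j lies outside [X₀, X_f]. -/

import Mathlib

/-!
Replace the path by its running maximum, capped at `X_f`. This path is monotone, has the same
endpoints, and each of its increments is at most the corresponding increment of `x` in absolute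
value, so `θ` of each increment can only decrease. Its total variation is `X_f - X₀`, whereas a
path through a point `x_j` outside `[X₀, X_f]` has total variation at least
`|x_j - X₀| + |X_f - x_j| > X_f - X₀`; hence some increment decreases strictly, and so does the sum.
-/

open Finset

section ClampedRunningMax

variable {α : Type*} [LinearOrder α]

def clampedRunningMax (c : α) (x : ℕ → α) (i : ℕ) : α :=
  min c (partialSups x i)

theorem clampedRunningMax_monotone (c : α) (x : ℕ → α) : Monotone (clampedRunningMax c x) :=
  fun _ _ hij => min_le_min le_rfl (partialSups_monotone x hij)

theorem clampedRunningMax_zero {c : α} {x : ℕ → α} (h : x 0 ≤ c) :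
    clampedRunningMax c x 0 = x 0 := by
  rw [clampedRunningMax, partialSups_zero, min_eq_right h]

theorem clampedRunningMax_of_le {c : α} {x : ℕ → α} {n : ℕ} (h : c ≤ x n) :
    clampedRunningMax c x n = c :=
  min_eq_left (h.trans (le_partialSups x n))

end ClampedRunningMax

section PathVariation

variable {α : Type*} [AddCommGroup α] [LinearOrder α] [IsOrderedAddMonoid α]

theorem abs_partialSups_succ_sub_le (x : ℕ → α) (i : ℕ) :
    |partialSups x (i + 1) - partialSups x i| ≤ |x (i + 1) - x i| := by
  have hsucc : partialSups x (i + 1) = partialSups x i ⊔ x (i + 1) := partialSups_succ x i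
  rw [hsucc, abs_of_nonneg (sub_nonneg.2 le_sup_left), sub_le_iff_le_add]
  refine sup_le (le_add_of_nonneg_left (abs_nonneg _)) ?_
  calc x (i + 1) ≤ |x (i + 1) - x i| + x i := by
        simpa only [sub_le_iff_le_add] using le_abs_self (x (i + 1) - x i)
    _ ≤ |x (i + 1) - x i| + partialSups x i := by gcongr; exact le_partialSups x i

theorem abs_min_sub_min_le_abs (c a b : α) : |min c a - min c b| ≤ |a - b| := by
  simpa only [sub_self, abs_zero, max_eq_right (abs_nonneg (a - b))]
    using abs_min_sub_min_le_max c a c b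

theorem abs_sub_le_sum_range_abs_sub (x : ℕ → α) (n : ℕ) :
    |x n - x 0| ≤ ∑ i ∈ range n, |x (i + 1) - x i| := by
  simpa only [sum_range_sub] using abs_sum_le_sum_abs (fun i => x (i + 1) - x i) (range n)

theorem abs_sub_add_abs_sub_le_sum_range (x : ℕ → α) {j n : ℕ} (hj : j ≤ n) :
    |x j - x 0| + |x n - x j| ≤ ∑ i ∈ range n, |x (i + 1) - x i| := by
  obtain ⟨m, rfl⟩ := Nat.exists_eq_add_of_le hj
  rw [sum_range_add]
  exact add_le_add (abs_sub_le_sum_range_abs_sub x j)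
    (abs_sub_le_sum_range_abs_sub (fun i => x (j + i)) m)

theorem Monotone.sum_range_abs_sub {x : ℕ → α} (hx : Monotone x) (n : ℕ) :
    ∑ i ∈ range n, |x (i + 1) - x i| = x n - x 0 := by
  rw [← sum_range_sub]
  exact sum_congr rfl fun i _ => abs_of_nonneg (sub_nonneg.2 (hx i.le_succ))

theorem sub_lt_abs_sub_add_abs_sub {a b c : α} (hc : c < a ∨ b < c) :
    b - a < |c - a| + |b - c| := by
  rw [← sub_add_sub_cancel' c]
  rcases hc with hc | hc
  · exact add_lt_add_of_lt_of_le ((sub_neg.2 hc).trans_le (abs_nonneg _)) (le_abs_self _)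
  · exact add_lt_add_of_le_of_lt (le_abs_self _) ((sub_neg.2 hc).trans_le (abs_nonneg _))

theorem abs_clampedRunningMax_succ_sub_le (c : α) (x : ℕ → α) (i : ℕ) :
    |clampedRunningMax c x (i + 1) - clampedRunningMax c x i| ≤ |x (i + 1) - x i| :=
  (abs_min_sub_min_le_abs _ _ _).trans (abs_partialSups_succ_sub_le x i)

end PathVariation

theorem StrictMonoOn.sum_lt_sum_of_le_of_sum_lt {ι α β : Type*} [AddCommMonoid α] [LinearOrder α]
    [IsOrderedCancelAddMonoid α] [AddCommMonoid β] [PartialOrder β] [IsOrderedCancelAddMonoid β]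
    {θ : α → β} (hθ : StrictMonoOn θ (Set.Ici 0)) {s : Finset ι} {f g : ι → α}
    (hf : ∀ i ∈ s, 0 ≤ f i) (hfg : ∀ i ∈ s, f i ≤ g i)
    (hsum : ∑ i ∈ s, f i < ∑ i ∈ s, g i) :
    ∑ i ∈ s, θ (f i) < ∑ i ∈ s, θ (g i) := by
  obtain ⟨k, hk, hlt⟩ := exists_lt_of_sum_lt hsum
  refine sum_lt_sum (fun i hi => ?_) ⟨k, hk, hθ (hf k hk) ((hf k hk).trans hlt.le) hlt⟩
  exact hθ.monotoneOn (hf i hi) ((hf i hi).trans (hfg i hi)) (hfg i hi)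

theorem stmt_2 (θ : ℝ → ℝ) (hmono : StrictMonoOn θ (Set.Ici 0))
    (X₀ Xf : ℝ) (hX : X₀ < Xf) (n : ℕ)
    (x : ℕ → ℝ) (h0 : x 0 = X₀) (hnf : x n = Xf)
    (hout : ∃ j ≤ n, x j < X₀ ∨ Xf < x j) :
    ∃ y : ℕ → ℝ, y 0 = X₀ ∧ y n = Xf ∧
      (∀ i j, i ≤ j → j ≤ n → y i ≤ y j) ∧
      ∑ i ∈ Finset.range n, θ |y (i + 1) - y i| <
        ∑ i ∈ Finset.range n, θ |x (i + 1) - x i| := by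
  obtain ⟨j, hj, hxj⟩ := hout
  have hy0 : clampedRunningMax Xf x 0 = X₀ := by
    rw [clampedRunningMax_zero (h0 ▸ hX.le), h0]
  have hyn : clampedRunningMax Xf x n = Xf := clampedRunningMax_of_le hnf.ge
  refine ⟨clampedRunningMax Xf x, hy0, hyn,
    fun i k hik _ => clampedRunningMax_monotone Xf x hik, ?_⟩
  refine hmono.sum_lt_sum_of_le_of_sum_lt (fun i _ => abs_nonneg _)
    (fun i _ => abs_clampedRunningMax_succ_sub_le Xf x i) ?_
  calc ∑ i ∈ range n, |clampedRunningMax Xf x (i + 1) - clampedRunningMax Xf x i| = Xf - X₀ := by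
        rw [(clampedRunningMax_monotone Xf x).sum_range_abs_sub, hy0, hyn]
    _ < |x j - x 0| + |x n - x j| := by rw [h0, hnf]; exact sub_lt_abs_sub_add_abs_sub hxj
    _ ≤ ∑ i ∈ range n, |x (i + 1) - x i| := abs_sub_add_abs_sub_le_sum_range x hj
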